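/- arXiv:1607.05929 — 2 statements merged into one kernel-verified Lean document; each statement's English description precedes it below -/
import Mathlib

section
/- Let 0 < γ < 1 and n ≥ 1. Then 0 < 1/(n^γ · Γ(1-γ)) < ∑_{k=0}^{n-1} g_k^γ ≤ 1/n^γ, and moreover ∑_{k=0}^{n-1} g_k^γ = −∑_{k=n}^{∞} g_k^γ, where the tail series converges. -/
/-- Grünwald–Letnikov coefficient `g_k^α = (-1)^k * binom(α,k)`. -/
noncomputable def gl (a : ℝ) (k : ℕ) : ℝ :=
  (-1 : ℝ) ^ k * (∏ j ∈ Finset.range k, (a - j)) / (Nat.factorial k : ℝ)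

/-- Shifted Grünwald weights. -/
noncomputable def glw (a : ℝ) : ℕ → ℝ
  | 0 => a / 2 * gl a 0
  | (k+1) => a / 2 * gl a (k+1) + (2 - a) / 2 * gl a k

/-- Second-order Lubich coefficients `l_m^{2,γ}`. -/
noncomputable def lub2 (g : ℝ) (m : ℕ) : ℝ :=
  (3/2 : ℝ) ^ g * ∑ k ∈ Finset.range (m+1), (1/3 : ℝ) ^ k * gl g k * gl g (m - k)

/-- The Toeplitz matrix `B_α` of size `(M-1) × (M-1)`. -/
noncomputable def Bmat (a : ℝ) (M : ℕ) : Matrix (Fin (M-1)) (Fin (M-1)) ℝ :=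
  fun i j => if (j : ℕ) ≤ (i : ℕ) + 1 then glw a ((i : ℕ) + 1 - (j : ℕ)) else 0

/-- The symmetric matrix `A_α = B_α + B_αᵀ`. -/
noncomputable def Amat (a : ℝ) (M : ℕ) : Matrix (Fin (M-1)) (Fin (M-1)) ℝ :=
  Bmat a M + (Bmat a M).transpose

/-!
Since `g_{k+1}^γ = -(γ/(k+1)) g_k^{γ-1}`, the partial sums telescope:
`∑_{k<n} g_k^γ = g_{n-1}^{γ-1} = ∏_{j=1}^{n-1} (1 - γ/j) > 0`. The scaled partial sums
`T_n = n^γ g_{n-1}^{γ-1}` start at `T_1 = 1` and decrease strictly, since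
`T_{n+1}/T_n = (1 + 1/n)^γ (1 - γ/n) < (1 + γ/n)(1 - γ/n) < 1` by Bernoulli's inequality;
Euler's limit formula for `Γ(1-γ)` gives `T_n → 1/Γ(1-γ)`, so `1/Γ(1-γ) < T_n ≤ 1`.
Hence the partial sums tend to `0`, and as `g_k^γ ≤ 0` for `k ≥ 1` the series `∑ g_k^γ`
converges to `0`, which is the tail identity.
-/

open Finset Filter Topology Real

lemma gl_zero (a : ℝ) : gl a 0 = 1 := by simp [gl]

lemma gl_succ (a : ℝ) (k : ℕ) : gl a (k + 1) = -((a - k) / (k + 1)) * gl a k := by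
  simp only [gl, prod_range_succ, Nat.factorial_succ, pow_succ]
  push_cast
  field_simp

lemma gl_succ_eq_neg_mul_gl_sub_one (a : ℝ) (k : ℕ) :
    gl a (k + 1) = -(a / (k + 1)) * gl (a - 1) k := by
  simp only [gl, prod_range_succ', Nat.factorial_succ, pow_succ]
  push_cast
  field_simp
  simp only [sub_sub, add_comm (1 : ℝ)]
  ring

lemma sum_range_succ_gl (a : ℝ) (m : ℕ) : ∑ k ∈ range (m + 1), gl a k = gl (a - 1) m := by
  induction m with
  | zero => simp [gl_zero]
  | succ m ih =>
    rw [sum_range_succ, ih, gl_succ_eq_neg_mul_gl_sub_one, gl_succ (a - 1)]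
    field_simp
    ring

lemma gl_pos_of_neg {a : ℝ} (ha : a < 0) (k : ℕ) : 0 < gl a k := by
  induction k with
  | zero => simp [gl_zero]
  | succ k ih =>
    have hfactor : 0 < -((a - k) / (k + 1)) :=
      neg_pos.2 (div_neg_of_neg_of_pos (by linarith [k.cast_nonneg (α := ℝ)]) (by positivity))
    rw [gl_succ]
    positivity

lemma gl_succ_nonpos {a : ℝ} (h0 : 0 ≤ a) (h1 : a < 1) (k : ℕ) : gl a (k + 1) ≤ 0 := by
  rw [gl_succ_eq_neg_mul_gl_sub_one, neg_mul]
  exact neg_nonpos.2 (mul_nonneg (by positivity) (gl_pos_of_neg (by linarith) k).le)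

lemma GammaSeq_eq_rpow_div_gl_neg (s : ℝ) (n : ℕ) :
    GammaSeq s n = n ^ s / ((n + 1) * gl (-s) (n + 1)) := by
  have hsign : (-1 : ℝ) ^ (n + 1) * ∏ j ∈ range (n + 1), (-s - j) =
      ∏ j ∈ range (n + 1), (s + j) := by
    simpa [add_comm] using (prod_neg (s := range (n + 1)) fun j : ℕ => -s - j).symm
  rw [GammaSeq, gl, mul_div_assoc', hsign, Nat.factorial_succ]
  push_cast
  field_simp

lemma add_one_rpow_mul_sub_lt {x γ : ℝ} (hγ0 : 0 < γ) (hγ1 : γ < 1) (hx : γ < x) :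
    (x + 1) ^ γ * (x - γ) < x ^ γ * x := by
  have hx0 : 0 < x := hγ0.trans hx
  have hbernoulli : (1 + 1 / x) ^ γ < 1 + γ * (1 / x) :=
    rpow_one_add_lt_one_add_mul_self (by linarith [one_div_pos.2 hx0])
      (one_div_pos.2 hx0).ne' hγ0 hγ1
  calc (x + 1) ^ γ * (x - γ) = x ^ γ * ((1 + 1 / x) ^ γ * (x - γ)) := by
        rw [← mul_assoc, ← mul_rpow hx0.le (by positivity)]
        field_simp
    _ < x ^ γ * ((1 + γ * (1 / x)) * (x - γ)) := by gcongr
    _ = x ^ γ * (x - γ ^ 2 / x) := by field_simp; ring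
    _ < x ^ γ * x := by gcongr; linarith [div_pos (pow_pos hγ0 2) hx0]

lemma strictAnti_rpow_mul_gl_sub_one {γ : ℝ} (hγ0 : 0 < γ) (hγ1 : γ < 1) :
    StrictAnti fun m : ℕ => ((m : ℝ) + 1) ^ γ * gl (γ - 1) m := by
  refine strictAnti_nat_of_succ_lt fun m => ?_
  have hgl : 0 < gl (γ - 1) m := gl_pos_of_neg (by linarith) m
  have hx : γ < (m : ℝ) + 1 := by linarith [m.cast_nonneg (α := ℝ)]
  have hstep := add_one_rpow_mul_sub_lt hγ0 hγ1 hx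
  rw [gl_succ, Nat.cast_succ]
  calc ((m : ℝ) + 1 + 1) ^ γ * (-((γ - 1 - m) / (m + 1)) * gl (γ - 1) m)
      = ((m + 1 + 1) ^ γ * (m + 1 - γ)) / (m + 1) * gl (γ - 1) m := by ring
    _ < ((m + 1) ^ γ * (m + 1)) / (m + 1) * gl (γ - 1) m := by gcongr
    _ = ((m : ℝ) + 1) ^ γ * gl (γ - 1) m := by field_simp

lemma GammaSeq_mul_rpow_mul_gl_sub_one {γ : ℝ} (hγ1 : γ < 1) {m : ℕ} (hm : 1 ≤ m) :
    GammaSeq (1 - γ) m * (((m : ℝ) + 2) ^ γ * gl (γ - 1) (m + 1)) =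
      ((m : ℝ) / (m + 1)) ^ (1 - γ) * (((m : ℝ) + 2) / (m + 1)) ^ γ := by
  have hm0 : (0 : ℝ) < m := by exact_mod_cast hm
  have hgl : 0 < gl (γ - 1) (m + 1) := gl_pos_of_neg (by linarith) _
  have hsplit : ((m : ℝ) + 1) ^ (1 - γ) * ((m : ℝ) + 1) ^ γ = (m : ℝ) + 1 := by
    rw [← rpow_add (by positivity), sub_add_cancel, rpow_one]
  rw [GammaSeq_eq_rpow_div_gl_neg, neg_sub, div_rpow hm0.le (by positivity),
    div_rpow (by positivity) (by positivity), div_mul_div_comm, hsplit]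
  field_simp

lemma tendsto_rpow_mul_gl_sub_one {γ : ℝ} (hγ1 : γ < 1) :
    Tendsto (fun m : ℕ => ((m : ℝ) + 1) ^ γ * gl (γ - 1) m) atTop
      (𝓝 (1 / Gamma (1 - γ))) := by
  have hΓ : Gamma (1 - γ) ≠ 0 := (Gamma_pos_of_pos (by linarith)).ne'
  have hleft : Tendsto (fun m : ℕ => ((m : ℝ) / (m + 1)) ^ (1 - γ)) atTop (𝓝 1) := by
    simpa using
      (tendsto_natCast_div_add_atTop (1 : ℝ)).rpow_const (p := 1 - γ) (Or.inl one_ne_zero)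
  have hright : Tendsto (fun m : ℕ => (((m : ℝ) + 2) / (m + 1)) ^ γ) atTop (𝓝 1) := by
    have hratio : Tendsto (fun m : ℕ => ((m : ℝ) + 2) / (m + 1)) atTop (𝓝 1) := by
      have h := (tendsto_one_div_add_atTop_nhds_zero_nat (𝕜 := ℝ)).const_add 1
      rw [add_zero] at h
      refine h.congr fun m => ?_
      field_simp
      ring
    simpa using hratio.rpow_const (p := γ) (Or.inl one_ne_zero)
  have hlim := (hleft.mul hright).div (GammaSeq_tendsto_Gamma (1 - γ)) hΓ
  rw [one_mul] at hlim
  rw [← tendsto_add_atTop_iff_nat 1]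
  refine hlim.congr' ?_
  filter_upwards [eventually_ge_atTop 1] with m hm
  have hm0 : (0 : ℝ) < m := by exact_mod_cast hm
  have hgl : 0 < gl (γ - 1) (m + 1) := gl_pos_of_neg (by linarith) _
  have hΓm : 0 < GammaSeq (1 - γ) m := by
    rw [GammaSeq_eq_rpow_div_gl_neg, neg_sub]
    positivity
  rw [Pi.div_apply, ← GammaSeq_mul_rpow_mul_gl_sub_one hγ1 hm, mul_div_cancel_left₀ _ hΓm.ne']
  push_cast
  ring_nf

lemma hasSum_gl {γ : ℝ} (hγ0 : 0 < γ) (hγ1 : γ < 1) : HasSum (gl γ) 0 := by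
  have hpartial : Tendsto (fun m => ∑ k ∈ range (m + 1), gl γ k) atTop (𝓝 0) := by
    have hpow : Tendsto (fun m : ℕ => (((m : ℝ) + 1) ^ γ)⁻¹) atTop (𝓝 0) :=
      ((tendsto_rpow_atTop hγ0).comp
        (tendsto_atTop_add_const_right _ 1 tendsto_natCast_atTop_atTop)).inv_tendsto_atTop
    have h := (tendsto_rpow_mul_gl_sub_one hγ1).mul hpow
    rw [mul_zero] at h
    refine h.congr fun m => ?_
    rw [sum_range_succ_gl, mul_comm, ← mul_assoc, inv_mul_cancel₀ (by positivity), one_mul]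
  rw [← hasSum_nat_add_iff' 1, sum_range_one, gl_zero, zero_sub,
    ← neg_neg (fun j => gl γ (j + 1))]
  refine HasSum.neg ((hasSum_iff_tendsto_nat_of_nonneg (fun j => ?_) 1).2 ?_)
  · exact neg_nonneg.2 (gl_succ_nonpos hγ0.le hγ1 j)
  · have h := hpartial.const_sub 1
    rw [sub_zero] at h
    refine h.congr fun m => ?_
    rw [sum_range_succ', gl_zero]
    simp [sum_neg_distrib]

theorem stmt1 (γ : ℝ) (hγ0 : 0 < γ) (hγ1 : γ < 1) (n : ℕ) (hn : 1 ≤ n) :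
    0 < 1 / ((n : ℝ) ^ γ * Real.Gamma (1 - γ)) ∧
    1 / ((n : ℝ) ^ γ * Real.Gamma (1 - γ)) < ∑ k ∈ Finset.range n, gl γ k ∧
    (∑ k ∈ Finset.range n, gl γ k) ≤ 1 / (n : ℝ) ^ γ ∧
    HasSum (fun j : ℕ => gl γ (n + j)) (-(∑ k ∈ Finset.range n, gl γ k)) := by
  obtain ⟨m, rfl⟩ : ∃ m, n = m + 1 := ⟨n - 1, by omega⟩
  have hΓ : 0 < Gamma (1 - γ) := Gamma_pos_of_pos (by linarith)
  have hpow : (0 : ℝ) < ((m : ℝ) + 1) ^ γ := by positivity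
  have hanti := strictAnti_rpow_mul_gl_sub_one hγ0 hγ1
  have hlower : 1 / Gamma (1 - γ) < ((m : ℝ) + 1) ^ γ * gl (γ - 1) m :=
    (hanti.antitone.le_of_tendsto (tendsto_rpow_mul_gl_sub_one hγ1) (m + 1)).trans_lt
      (hanti m.lt_succ_self)
  have hupper : ((m : ℝ) + 1) ^ γ * gl (γ - 1) m ≤ 1 := by
    simpa [gl_zero] using hanti.antitone m.zero_le
  have htail := (hasSum_nat_add_iff' (m + 1)).2 (hasSum_gl hγ0 hγ1)
  simp only [zero_sub, add_comm _ (m + 1)] at htail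
  refine ⟨by positivity, ?_, ?_, htail⟩ <;> rw [sum_range_succ_gl] <;> push_cast
  · calc 1 / (((m : ℝ) + 1) ^ γ * Gamma (1 - γ)) = 1 / Gamma (1 - γ) / ((m : ℝ) + 1) ^ γ := by
          ring
      _ < ((m : ℝ) + 1) ^ γ * gl (γ - 1) m / ((m : ℝ) + 1) ^ γ := by gcongr
      _ = gl (γ - 1) m := by field_simp
  · rwa [le_div_iff₀' hpow]
end

section
/- Let 7/8 ≤ γ < 1 and z ∈ [0,π]. Then ∑_{k=1}^{3} l_k^{2,γ} · (cos(k·z) − 1) ≥ 0. -/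
/-
The three cosine differences share the factor `1 - cos z`: with `c = cos z`,
`cos 2z - 1 = -2 (1 - c)(1 + c)` and `cos 3z - 1 = -(1 - c)(2c + 1)²`. What remains after
extracting `(3/2)^γ γ (1 - c)` is a quadratic in `c` that is concave for `7/8 ≤ γ ≤ 1`, so it
is nonnegative on `[-1, 1]` as soon as it is nonnegative at `c = ±1`.
-/

lemma lub2_one (γ : ℝ) : lub2 γ 1 = (3/2 : ℝ) ^ γ * (-(4 * γ / 3)) := by
  rw [lub2]
  congr 1
  simp only [gl, Finset.sum_range_succ, Finset.prod_range_succ, Finset.sum_range_zero,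
    Finset.prod_range_zero]
  norm_num [Nat.factorial]
  ring

lemma lub2_two (γ : ℝ) : lub2 γ 2 = (3/2 : ℝ) ^ γ * (γ * (8 * γ - 5) / 9) := by
  rw [lub2]
  congr 1
  simp only [gl, Finset.sum_range_succ, Finset.prod_range_succ, Finset.sum_range_zero,
    Finset.prod_range_zero]
  norm_num [Nat.factorial]
  ring

lemma lub2_three (γ : ℝ) :
    lub2 γ 3 = (3/2 : ℝ) ^ γ * (4 * γ * (γ - 1) * (7 - 8 * γ) / 81) := by
  rw [lub2]
  congr 1
  simp only [gl, Finset.sum_range_succ, Finset.prod_range_succ, Finset.sum_range_zero,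
    Finset.prod_range_zero]
  norm_num [Nat.factorial]
  ring

noncomputable def lub2CosFactor (γ c : ℝ) : ℝ :=
  4 / 3 - 2 * (8 * γ - 5) * (1 + c) / 9 - 4 * (1 - γ) * (8 * γ - 7) * (2 * c + 1) ^ 2 / 81

lemma sum_lub2_mul_cos_sub_one (γ z : ℝ) :
    ∑ k ∈ Finset.Icc 1 3, lub2 γ k * (Real.cos ((k : ℝ) * z) - 1)
      = (3/2 : ℝ) ^ γ * γ * (1 - Real.cos z) * lub2CosFactor γ (Real.cos z) := by
  rw [show Finset.Icc 1 3 = ({1, 2, 3} : Finset ℕ) from rfl, Finset.sum_insert (by decide),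
    Finset.sum_insert (by decide), Finset.sum_singleton]
  push_cast
  rw [one_mul, Real.cos_two_mul, Real.cos_three_mul, lub2_one, lub2_two, lub2_three,
    lub2CosFactor]
  ring

lemma lub2CosFactor_nonneg {γ c : ℝ} (hγ₁ : 7/8 ≤ γ) (hγ₂ : γ ≤ 1) (hc₁ : -1 ≤ c)
    (hc₂ : c ≤ 1) : 0 ≤ lub2CosFactor γ c := by
  have hconcave : 0 ≤ (1 - γ) * (8 * γ - 7) := mul_nonneg (by linarith) (by linarith)
  -- `-16 (1 - γ)(8γ - 7) / 81` is the leading coefficient in `c`; the chord through `c = ±1` remains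
  have interpolation : lub2CosFactor γ c
      = (1 - c) / 2 * lub2CosFactor γ (-1) + (1 + c) / 2 * lub2CosFactor γ 1
        + 16 / 81 * ((1 - γ) * (8 * γ - 7)) * ((1 - c) * (1 + c)) := by
    simp only [lub2CosFactor]
    ring
  have at_neg_one : lub2CosFactor γ (-1) = 4 / 3 - 4 * ((1 - γ) * (8 * γ - 7)) / 81 := by
    simp only [lub2CosFactor]
    ring
  have at_one : lub2CosFactor γ 1 = 4 * (1 - γ) * (15 - 8 * γ) / 9 := by
    simp only [lub2CosFactor]
    ring
  have h_neg_one : 0 ≤ lub2CosFactor γ (-1) := by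
    rw [at_neg_one]
    nlinarith
  have h_one : 0 ≤ lub2CosFactor γ 1 := by
    rw [at_one]
    have h_one_sub : 0 ≤ 1 - γ := by linarith
    have h_fifteen_sub : 0 ≤ 15 - 8 * γ := by linarith
    positivity
  have h_left : 0 ≤ 1 - c := by linarith
  have h_right : 0 ≤ 1 + c := by linarith
  rw [interpolation]
  positivity

theorem stmt13_general (γ : ℝ) (h1 : 7/8 ≤ γ) (h2 : γ < 1) (z : ℝ) :
    0 ≤ ∑ k ∈ Finset.Icc 1 3, lub2 γ k * (Real.cos ((k : ℝ) * z) - 1) := by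
  rw [sum_lub2_mul_cos_sub_one]
  have hγ : 0 ≤ γ := by linarith
  have hcos : 0 ≤ 1 - Real.cos z := by linarith [Real.cos_le_one z]
  have hfactor := lub2CosFactor_nonneg h1 h2.le (Real.neg_one_le_cos z) (Real.cos_le_one z)
  positivity

theorem stmt13 (γ : ℝ) (h1 : 7/8 ≤ γ) (h2 : γ < 1) (z : ℝ)
    (hz : z ∈ Set.Icc 0 Real.pi) :
    0 ≤ ∑ k ∈ Finset.Icc 1 3, lub2 γ k * (Real.cos ((k : ℝ) * z) - 1) :=
  stmt13_general γ h1 h2 z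
end
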